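/- Let K, H, μ be real numbers with K ≠ 0 and A := μ²K − 2μH + 1 ≠ 0, and let K* := K/A, H* := (H − μK)/A. Then (H*² − K*)/K*² = (H² − K)/K². -/

import Mathlib

theorem sq_div_sub_div {a b A : ℝ} (hA : A ≠ 0) :
    (a / A) ^ 2 - b / A = (a ^ 2 - b * A) / A ^ 2 := by
  field_simp

theorem parallel_mean_sq_sub_curvature (K H μ : ℝ) :
    (H - μ * K) ^ 2 - K * (μ ^ 2 * K - 2 * μ * H + 1) = H ^ 2 - K := by
  ring

theorem stmt_9_general (K H μ : ℝ)
    (hA : μ^2 * K - 2 * μ * H + 1 ≠ 0) :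
    (((H - μ * K) / (μ^2 * K - 2 * μ * H + 1))^2 -
        K / (μ^2 * K - 2 * μ * H + 1)) /
      (K / (μ^2 * K - 2 * μ * H + 1))^2 = (H^2 - K) / K^2 := by
  rw [sq_div_sub_div hA, parallel_mean_sq_sub_curvature, div_pow,
    div_div_div_cancel_right₀ (pow_ne_zero 2 hA)]

theorem stmt_9 (K H μ : ℝ) (hK : K ≠ 0)
    (hA : μ^2 * K - 2 * μ * H + 1 ≠ 0) :
    (((H - μ * K) / (μ^2 * K - 2 * μ * H + 1))^2 -
        K / (μ^2 * K - 2 * μ * H + 1)) /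
      (K / (μ^2 * K - 2 * μ * H + 1))^2 = (H^2 - K) / K^2 :=
  stmt_9_general K H μ hA
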